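/- arXiv:2205.12513 — 4 statements merged into one kernel-verified Lean document; each statement's English description precedes it below -/
import Mathlib

section
/- For every Λ > 0, f_Λ(φ) → −∞ as φ → +∞ and f_Λ(φ) → +∞ as φ → −∞; in particular, the range of f_Λ is all of ℝ. -/
/-! As `φ → +∞`, a species `i` of negative valence has `cᵢ = c₀^{λᵢ/λ₀} e^{μ̄ᵢ} e^{|zᵢ| φ}`, so the
constraint `log c₀ + Λ λ₀ ∑ⱼ λⱼ cⱼ = μ₀` forces `c₀ → 0`. Hence `log c₀ → -∞`, the weighted total
`∑ⱼ λⱼ cⱼ = (μ₀ - log c₀) / (Λ λ₀)` tends to `+∞`, and every species of nonnegative valence dies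
out. With `κ > 0` so small that `zⱼ + κ λⱼ ≤ 0` for every negative valence,
`f ≤ ∑ⱼ (zⱼ + κ λⱼ)⁺ cⱼ - κ ∑ⱼ λⱼ cⱼ → -∞`. The limit at `-∞` is the same statement for `φ ↦ -φ`,
`z ↦ -z`, and surjectivity is the intermediate value theorem: `c₀` is continuous, as it solves an
equation that is strictly increasing in `c₀` and continuous in `φ`. -/

open Filter Real Set Topology

lemma Finset.sum_range_succ_eq_sum_Icc {M : Type*} [AddCommMonoid M] {f : ℕ → M} (h0 : f 0 = 0)
    (N : ℕ) : ∑ j ∈ Finset.range (N + 1), f j = ∑ j ∈ Finset.Icc 1 N, f j := by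
  rw [Finset.sum_range_eq_add_Ico _ N.add_one_pos, Finset.Ico_add_one_right_eq_Icc, h0, zero_add]

lemma exists_pos_forall_add_mul_nonpos {ι : Type*} (s : Finset ι) (z w : ι → ℝ) :
    ∃ κ > 0, ∀ i ∈ s, z i < 0 → z i + κ * w i ≤ 0 := by
  have hsmall : ∀ᶠ κ in 𝓝[>] (0 : ℝ), ∀ i ∈ s, z i < 0 → z i + κ * w i ≤ 0 := by
    refine (eventually_all_finset s).2 fun i _ => ?_
    by_cases hz : z i < 0
    · have hlim : Tendsto (fun κ => z i + κ * w i) (𝓝[>] 0) (𝓝 (z i + 0 * w i)) :=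
        (tendsto_const_nhds.add (tendsto_id.mul_const _)).mono_left nhdsWithin_le_nhds
      rw [zero_mul, add_zero] at hlim
      exact (hlim.eventually_lt_const hz).mono fun κ hκ _ => hκ.le
    · exact Eventually.of_forall fun _ h => absurd h hz
  obtain ⟨κ, hκ, hκpos⟩ := (hsmall.and self_mem_nhdsWithin).exists
  exact ⟨κ, hκpos, hκ⟩

lemma tendsto_sum_mul_atBot_of_tendsto_sum_mul_atTop {ι α : Type*} {l : Filter α} {s : Finset ι}
    {z w : ι → ℝ} {g : ι → α → ℝ} (hg : ∀ i ∈ s, ∀ x, 0 ≤ g i x)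
    (hzero : ∀ i ∈ s, 0 ≤ z i → Tendsto (g i) l (𝓝 0))
    (htop : Tendsto (fun x => ∑ i ∈ s, w i * g i x) l atTop) :
    Tendsto (fun x => ∑ i ∈ s, z i * g i x) l atBot := by
  obtain ⟨κ, hκ, hneg⟩ := exists_pos_forall_add_mul_nonpos s z w
  have hpos : Tendsto (fun x => ∑ i ∈ s, max (z i + κ * w i) 0 * g i x) l (𝓝 0) := by
    have hterms : Tendsto (fun x => ∑ i ∈ s, max (z i + κ * w i) 0 * g i x) l
        (𝓝 (∑ i ∈ s, (0 : ℝ))) := by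
      refine tendsto_finsetSum s fun i hi => ?_
      rcases lt_or_ge (z i) 0 with hz | hz
      · simp only [max_eq_right (hneg i hi hz), zero_mul, tendsto_const_nhds]
      · simpa using (hzero i hi hz).const_mul (max (z i + κ * w i) 0)
    rwa [Finset.sum_const_zero] at hterms
  refine tendsto_atBot_mono (fun x => ?_)
    (hpos.add_atBot (tendsto_neg_atTop_atBot.comp (htop.const_mul_atTop hκ)))
  simp only [Function.comp_apply, Finset.mul_sum, ← Finset.sum_neg_distrib,
    ← Finset.sum_add_distrib]
  refine Finset.sum_le_sum fun i hi => ?_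
  nlinarith [le_max_left (z i + κ * w i) 0, hg i hi x]

lemma tendsto_nhdsGT_zero_of_log_add_rpow_mul_le {α : Type*} {l : Filter α} {c g : α → ℝ}
    {a M : ℝ} (ha : 0 < a) (hc : ∀ x, 0 < c x) (hg : Tendsto g l atTop)
    (hle : ∀ x, log (c x) + c x ^ a * g x ≤ M) :
    Tendsto c l (𝓝[>] 0) := by
  refine (nhdsGT_basis 0).tendsto_right_iff.2 fun ε hε => ?_
  filter_upwards [hg.eventually_gt_atTop ((M - log ε) / ε ^ a), hg.eventually_ge_atTop 0]
    with x hgx hg0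
  refine ⟨hc x, lt_of_not_ge fun hεc => ?_⟩
  have hlog : log ε ≤ log (c x) := log_le_log hε hεc
  have hpow : ε ^ a * g x ≤ c x ^ a * g x := by gcongr
  have hbig : M - log ε < ε ^ a * g x := (div_lt_iff₀' (by positivity)).1 hgx
  linarith [hle x]

lemma tendsto_rpow_mul_exp_sub_mul_atTop_zero {c : ℝ → ℝ} (hc : Tendsto c atTop (𝓝[>] 0))
    {a z : ℝ} (ha : 0 < a) (hz : 0 ≤ z) (μ : ℝ) :
    Tendsto (fun φ => c φ ^ a * exp (μ - z * φ)) atTop (𝓝 0) := by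
  have hpow : Tendsto (fun φ => c φ ^ a) atTop (𝓝 0) := by
    simpa [zero_rpow ha.ne'] using (hc.mono_right nhdsWithin_le_nhds).rpow_const (Or.inr ha.le)
  have hcpos : ∀ᶠ φ in atTop, 0 < c φ := hc.eventually self_mem_nhdsWithin
  refine squeeze_zero' ?_ ?_ (by simpa using hpow.mul_const (exp μ))
  · filter_upwards [hcpos] with φ hφ using by positivity
  · filter_upwards [hcpos, eventually_ge_atTop 0] with φ hφ hφ0
    gcongr
    nlinarith

lemma continuous_of_strictMonoOn_of_apply_eq {X : Type*} [TopologicalSpace X] {G : X → ℝ → ℝ}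
    {c : X → ℝ} {M : ℝ} (hmono : ∀ x, StrictMonoOn (G x) (Ioi 0))
    (hcont : ∀ t, Continuous fun x => G x t) (hc : ∀ x, 0 < c x) (hG : ∀ x, G x (c x) = M) :
    Continuous c := by
  refine continuous_iff_continuousAt.2 fun x₀ => tendsto_order.2 ⟨fun b hb => ?_, fun b hb => ?_⟩
  · set t := max b (c x₀ / 2)
    have ht : 0 < t := lt_max_of_lt_right (half_pos (hc x₀))
    have hlt : G x₀ t < M :=
      hG x₀ ▸ hmono x₀ ht (hc x₀) (max_lt hb (half_lt_self (hc x₀)))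
    filter_upwards [((hcont t).tendsto x₀).eventually_lt_const hlt] with x hx
    refine (le_max_left b (c x₀ / 2)).trans_lt (lt_of_not_ge fun (hcx : c x ≤ t) => ?_)
    have := (hmono x).monotoneOn (hc x) ht hcx
    linarith [hG x]
  · have hb0 : 0 < b := (hc x₀).trans hb
    have hgt : M < G x₀ b := hG x₀ ▸ hmono x₀ (hc x₀) hb0 hb
    filter_upwards [((hcont b).tendsto x₀).eventually_const_lt hgt] with x hx
    refine lt_of_not_ge fun hcx => ?_
    have := (hmono x).monotoneOn hb0 (hc x) hcx
    linarith [hG x]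

/-- The concentration `c_{j,Λ}(φ)` of species `j`, given `c0 = c_{0,Λ}`. -/
noncomputable def concentration (c0 : ℝ → ℝ) (lam μbar z : ℕ → ℝ) (j : ℕ) (φ : ℝ) : ℝ :=
  c0 φ ^ (lam j / lam 0) * exp (μbar j - z j * φ)

section Concentration

variable {N : ℕ} {z lam μbar : ℕ → ℝ} {K M : ℝ} {c0 : ℝ → ℝ}

lemma concentration_pos (hc0pos : ∀ φ, 0 < c0 φ) (j : ℕ) (φ : ℝ) :
    0 < concentration c0 lam μbar z j φ := by
  unfold concentration
  have := hc0pos φ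
  positivity

lemma concentration_comp_neg (j : ℕ) (φ : ℝ) :
    concentration (fun φ => c0 (-φ)) lam μbar (fun j => -z j) j φ
      = concentration c0 lam μbar z j (-φ) := by
  rw [concentration, concentration, show μbar j - -z j * φ = μbar j - z j * -φ by ring]

lemma continuous_concentration (hc0 : Continuous c0) (hc0pos : ∀ φ, 0 < c0 φ) (j : ℕ) :
    Continuous (concentration c0 lam μbar z j) :=
  (hc0.rpow_const fun φ => Or.inl (hc0pos φ).ne').mul (by fun_prop)

variable (hlam : ∀ i ≤ N, 0 < lam i) (hK : 0 < K) (hc0pos : ∀ φ, 0 < c0 φ)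
  (hc0eq : ∀ φ, log (c0 φ) + K * ∑ j ∈ Finset.range (N + 1),
    lam j * concentration c0 lam μbar z j φ = M)
include hlam hK hc0pos hc0eq

lemma tendsto_solvent_nhdsGT_zero {i : ℕ} (hiN : i ≤ N) (hzi : z i < 0) :
    Tendsto c0 atTop (𝓝[>] 0) := by
  have hlami := hlam i hiN
  refine tendsto_nhdsGT_zero_of_log_add_rpow_mul_le (M := M)
    (div_pos hlami (hlam 0 N.zero_le)) hc0pos
    (g := fun φ => K * lam i * exp (μbar i - z i * φ)) ?_ fun φ => ?_
  · have hlin : Tendsto (fun φ => μbar i - z i * φ) atTop atTop :=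
      (tendsto_atTop_add_const_left _ (μbar i) (tendsto_id.const_mul_atTop (neg_pos.2 hzi))).congr
        fun φ => by simp only [id]; ring
    exact (tendsto_exp_atTop.comp hlin).const_mul_atTop (by positivity)
  · have hterm : lam i * concentration c0 lam μbar z i φ
        ≤ ∑ j ∈ Finset.range (N + 1), lam j * concentration c0 lam μbar z j φ :=
      Finset.single_le_sum (fun j hj => (mul_pos (hlam j (Finset.mem_range_succ_iff.1 hj))
        (concentration_pos hc0pos j φ)).le) (Finset.mem_range_succ_iff.2 hiN)
    have := mul_le_mul_of_nonneg_left hterm hK.le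
    simp only [concentration] at this hc0eq
    linarith [hc0eq φ]

lemma tendsto_sum_lam_mul_concentration_atTop {i : ℕ} (hiN : i ≤ N) (hzi : z i < 0) :
    Tendsto (fun φ => ∑ j ∈ Finset.range (N + 1), lam j * concentration c0 lam μbar z j φ)
      atTop atTop := by
  have hlog : Tendsto (fun φ => M + -log (c0 φ)) atTop atTop :=
    tendsto_atTop_add_const_left _ M (tendsto_neg_atBot_atTop.comp
      (tendsto_log_nhdsGT_zero.comp (tendsto_solvent_nhdsGT_zero hlam hK hc0pos hc0eq hiN hzi)))
  refine (hlog.atTop_div_const hK).congr fun φ => ?_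
  rw [div_eq_iff hK.ne', ← hc0eq φ]
  ring

lemma tendsto_sum_charge_atTop_atBot {i : ℕ} (hiN : i ≤ N) (hzi : z i < 0) :
    Tendsto (fun φ => ∑ j ∈ Finset.range (N + 1), z j * concentration c0 lam μbar z j φ)
      atTop atBot :=
  tendsto_sum_mul_atBot_of_tendsto_sum_mul_atTop
    (fun j _ φ => (concentration_pos hc0pos j φ).le)
    (fun j hj hzj => tendsto_rpow_mul_exp_sub_mul_atTop_zero
      (tendsto_solvent_nhdsGT_zero hlam hK hc0pos hc0eq hiN hzi)
      (div_pos (hlam j (Finset.mem_range_succ_iff.1 hj)) (hlam 0 N.zero_le)) hzj (μbar j))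
    (tendsto_sum_lam_mul_concentration_atTop hlam hK hc0pos hc0eq hiN hzi)

lemma tendsto_sum_charge_atBot_atTop {i : ℕ} (hiN : i ≤ N) (hzi : 0 < z i) :
    Tendsto (fun φ => ∑ j ∈ Finset.range (N + 1), z j * concentration c0 lam μbar z j φ)
      atBot atTop := by
  have hrefl := tendsto_sum_charge_atTop_atBot (z := fun j => -z j) (c0 := fun φ => c0 (-φ))
    hlam hK (fun φ => hc0pos (-φ))
    (fun φ => by simpa only [concentration_comp_neg] using hc0eq (-φ))
    hiN (neg_lt_zero.2 hzi)
  rw [← tendsto_comp_neg_atTop_iff]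
  refine (tendsto_neg_atBot_atTop.comp hrefl).congr fun φ => ?_
  simp only [Function.comp_apply, concentration_comp_neg, neg_mul, Finset.sum_neg_distrib, neg_neg]

lemma continuous_solvent : Continuous c0 := by
  refine continuous_of_strictMonoOn_of_apply_eq (M := M)
    (G := fun φ t => log t + K * ∑ j ∈ Finset.range (N + 1),
      lam j * (t ^ (lam j / lam 0) * exp (μbar j - z j * φ)))
    (fun φ => ?_) (fun t => by fun_prop) hc0pos hc0eq
  refine strictMonoOn_log.add_monotone fun s hs t ht hst => ?_
  have hs0 : 0 ≤ s := le_of_lt hs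
  gcongr with j hj
  · exact (hlam j (Finset.mem_range_succ_iff.1 hj)).le
  · exact div_nonneg (hlam j (Finset.mem_range_succ_iff.1 hj)).le (hlam 0 N.zero_le).le

end Concentration

theorem stmt6_general
    (N : ℕ)
    (z lam μhat : ℕ → ℝ) (μtilde0 : ℝ)
    (hz0 : z 0 = 0)
    (hmix : ∃ i j, 1 ≤ i ∧ i ≤ N ∧ 1 ≤ j ∧ j ≤ N ∧ z i * z j < 0)
    (hlam : ∀ i, i ≤ N → 0 < lam i)
    (μbar : ℕ → ℝ)
    (Λ : ℝ) (hΛ : 0 < Λ)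
    (c0 : ℝ → ℝ) (hc0pos : ∀ φ, 0 < c0 φ)
    (hc0eq : ∀ φ : ℝ, Real.log (c0 φ)
        + Λ * lam 0 * ∑ j ∈ Finset.range (N+1),
            lam j * (c0 φ) ^ (lam j / lam 0) * Real.exp (μbar j - z j * φ)
      = Λ * lam 0 * μtilde0 + μhat 0)
    :
    Filter.Tendsto (fun φ : ℝ => ∑ i ∈ Finset.Icc 1 N, z i * ((c0 φ) ^ (lam i / lam 0) * Real.exp (μbar i - z i * φ))) Filter.atTop Filter.atBot ∧
    Filter.Tendsto (fun φ : ℝ => ∑ i ∈ Finset.Icc 1 N, z i * ((c0 φ) ^ (lam i / lam 0) * Real.exp (μbar i - z i * φ))) Filter.atBot Filter.atTop ∧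
    Function.Surjective (fun φ : ℝ => ∑ i ∈ Finset.Icc 1 N, z i * ((c0 φ) ^ (lam i / lam 0) * Real.exp (μbar i - z i * φ))) := by
  have hK : 0 < Λ * lam 0 := mul_pos hΛ (hlam 0 N.zero_le)
  have hc0eq' : ∀ φ, log (c0 φ) + Λ * lam 0 * ∑ j ∈ Finset.range (N + 1),
      lam j * concentration c0 lam μbar z j φ = Λ * lam 0 * μtilde0 + μhat 0 := fun φ => by
    simpa only [concentration, mul_assoc] using hc0eq φ
  obtain ⟨ineg, hinegN, hineg, ipos, hiposN, hipos⟩ :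
      ∃ a ≤ N, z a < 0 ∧ ∃ b ≤ N, 0 < z b := by
    obtain ⟨i, j, -, hiN, -, hjN, hij⟩ := hmix
    rcases mul_neg_iff.1 hij with ⟨hi, hj⟩ | ⟨hi, hj⟩
    · exact ⟨j, hjN, hj, i, hiN, hi⟩
    · exact ⟨i, hiN, hi, j, hjN, hj⟩
  have hf : (fun φ : ℝ => ∑ i ∈ Finset.Icc 1 N,
        z i * ((c0 φ) ^ (lam i / lam 0) * Real.exp (μbar i - z i * φ)))
      = fun φ => ∑ j ∈ Finset.range (N + 1), z j * concentration c0 lam μbar z j φ :=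
    funext fun φ => (Finset.sum_range_succ_eq_sum_Icc (by rw [hz0, zero_mul]) N).symm
  have hatTop := tendsto_sum_charge_atTop_atBot hlam hK hc0pos hc0eq' hinegN hineg
  have hatBot := tendsto_sum_charge_atBot_atTop hlam hK hc0pos hc0eq' hiposN hipos
  have hcont : Continuous fun φ => ∑ j ∈ Finset.range (N + 1),
      z j * concentration c0 lam μbar z j φ :=
    continuous_finsetSum _ fun j _ => continuous_const.mul
      (continuous_concentration (continuous_solvent hlam hK hc0pos hc0eq') hc0pos j)
  rw [hf]
  exact ⟨hatTop, hatBot, hcont.surjective' hatBot hatTop⟩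

theorem stmt6
    (N : ℕ) (hN : 1 ≤ N)
    (z lam μhat : ℕ → ℝ) (μtilde0 : ℝ)
    (hz0 : z 0 = 0)
    (hzne : ∀ i, 1 ≤ i → i ≤ N → z i ≠ 0)
    (hmix : ∃ i j, 1 ≤ i ∧ i ≤ N ∧ 1 ≤ j ∧ j ≤ N ∧ z i * z j < 0)
    (hlam : ∀ i, i ≤ N → 0 < lam i)
    (hμt : 0 < μtilde0)
    (hμhat : ∀ i, i ≤ N → 0 < μhat i)
    (μbar : ℕ → ℝ) (hμbar : ∀ i, μbar i = μhat i - lam i / lam 0 * μhat 0)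
    (Λ : ℝ) (hΛ : 0 < Λ)
    (c0 : ℝ → ℝ) (hc0pos : ∀ φ, 0 < c0 φ)
    (hc0eq : ∀ φ : ℝ, Real.log (c0 φ)
        + Λ * lam 0 * ∑ j ∈ Finset.range (N+1),
            lam j * (c0 φ) ^ (lam j / lam 0) * Real.exp (μbar j - z j * φ)
      = Λ * lam 0 * μtilde0 + μhat 0)
    :
    Filter.Tendsto (fun φ : ℝ => ∑ i ∈ Finset.Icc 1 N, z i * ((c0 φ) ^ (lam i / lam 0) * Real.exp (μbar i - z i * φ))) Filter.atTop Filter.atBot ∧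
    Filter.Tendsto (fun φ : ℝ => ∑ i ∈ Finset.Icc 1 N, z i * ((c0 φ) ^ (lam i / lam 0) * Real.exp (μbar i - z i * φ))) Filter.atBot Filter.atTop ∧
    Function.Surjective (fun φ : ℝ => ∑ i ∈ Finset.Icc 1 N, z i * ((c0 φ) ^ (lam i / lam 0) * Real.exp (μbar i - z i * φ))) :=
  stmt6_general N z lam μhat μtilde0 hz0 hmix hlam μbar Λ hΛ c0 hc0pos hc0eq
end

section
/- For every i ∈ {0, 1, …, N}, every m ∈ ℕ, and all reals a < b, c_{i,Λ} converges to c_i^* in C^m[a,b] as Λ → ∞; that is, lim_{Λ→∞} ∑_{k=0}^m sup_{φ ∈ [a,b]} |c_{i,Λ}^{(k)}(φ) − (c_i^*)^{(k)}(φ)| = 0, where the superscript (k) denotes the k-th derivative. -/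
/-!
Put `t = (Λ λ₀)⁻¹` and `u = log c₀`. The equation defining `c_{0,Λ}` becomes
`t u + S(u, φ) - t μ̂₀ = μ̃₀` with `S(u, φ) = ∑ⱼ λⱼ exp (u λⱼ/λ₀ + μ̄ⱼ - zⱼ φ)`, and at `t = 0`
it is the equation `S(u, φ) = μ̃₀` defining `log c₀*`. Since `∂ᵤS > 0`, the implicit function
theorem gives near every `(0, φ₀)` a smooth solution `u = Ψ(t, φ)`; as `u ↦ t u + S(u, φ)` is
strictly increasing for `t ≥ 0`, `Ψ` equals `log c_{0,Λ}` for `t > 0` and `log c₀*` for `t = 0`. Thus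
`c_{i,Λ}` and `cᵢ*` are the slices `t > 0` and `t = 0` of one jointly smooth function, whose
`φ`-derivatives are jointly continuous; so they converge locally uniformly as `t → 0⁺`, hence
uniformly on `[a, b]`.
-/

open Filter Real Set Topology Uniformity

theorem contDiffOn_iteratedDeriv_slice {F : ℝ × ℝ → ℝ} {W : Set (ℝ × ℝ)} (hW : IsOpen W)
    {n : ℕ} (hF : ContDiffOn ℝ n F W) {j : ℕ} (hj : j ≤ n) :
    ContDiffOn ℝ (n - j : ℕ) (fun q => iteratedDeriv j (fun y => F (q.1, y)) q.2) W := by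
  induction j with
  | zero => simpa using hF
  | succ j ih =>
    have hFj := ih (by omega)
    have hdiff : DifferentiableOn ℝ (fun q => iteratedDeriv j (fun y => F (q.1, y)) q.2) W :=
      hFj.differentiableOn (by exact_mod_cast (by omega : n - j ≠ 0))
    have hderiv : ContDiffOn ℝ (n - (j + 1) : ℕ)
        (fderiv ℝ fun q => iteratedDeriv j (fun y => F (q.1, y)) q.2) W :=
      hFj.fderiv_of_isOpen hW (by exact_mod_cast (by omega : n - (j + 1) + 1 ≤ n - j))
    refine (hderiv.clm_apply (contDiffOn_const (c := ((0 : ℝ), (1 : ℝ))))).congr fun q hq => ?_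
    have hslice : HasDerivAt (fun y : ℝ => ((q.1, y) : ℝ × ℝ)) (0, 1) q.2 :=
      (hasDerivAt_const q.2 q.1).prodMk (hasDerivAt_id q.2)
    rw [iteratedDeriv_succ]
    exact ((hdiff q hq).differentiableAt (hW.mem_nhds hq)).hasFDerivAt.comp_hasDerivAt q.2 hslice
      |>.deriv

theorem ContDiffAt.continuousAt_iteratedDeriv_slice {F : ℝ × ℝ → ℝ} {p : ℝ × ℝ} {n : ℕ}
    (hF : ContDiffAt ℝ n F p) {k : ℕ} (hk : k ≤ n) :
    ContinuousAt (fun q => iteratedDeriv k (fun y => F (q.1, y)) q.2) p := by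
  obtain ⟨U, hU, hFU⟩ := hF.contDiffOn le_rfl (by simp)
  exact (contDiffOn_iteratedDeriv_slice isOpen_interior (hFU.mono interior_subset) hk)
    |>.continuousOn.continuousAt (isOpen_interior.mem_nhds (mem_interior_iff_mem_nhds.2 hU))

theorem eventually_iteratedDeriv_eq_slice {f : ℝ → ℝ → ℝ} {F : ℝ × ℝ → ℝ} {S : Set ℝ}
    {p : ℝ × ℝ} (h : ∀ᶠ q in 𝓝 p, q.1 ∈ S → f q.1 q.2 = F q) (k : ℕ) :
    ∀ᶠ q in 𝓝 p, q.1 ∈ S →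
      iteratedDeriv k (f q.1) q.2 = iteratedDeriv k (fun y => F (q.1, y)) q.2 := by
  filter_upwards [eventually_eventually_nhds.2 h] with q hq hqS
  have hslice : Tendsto (fun y : ℝ => ((q.1, y) : ℝ × ℝ)) (𝓝 q.2) (𝓝 q) :=
    (continuous_const.prodMk continuous_id).tendsto' _ _ rfl
  exact EventuallyEq.iteratedDeriv_eq k ((hslice.eventually hq).mono fun y hy => hy hqS)

theorem tendstoLocallyUniformly_iteratedDeriv_of_contDiffAt {f : ℝ → ℝ → ℝ} {g : ℝ → ℝ}
    {S : Set ℝ} {t₀ : ℝ} {n : ℕ}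
    (h : ∀ x, ∃ F : ℝ × ℝ → ℝ, ContDiffAt ℝ n F (t₀, x) ∧
      ∀ᶠ q in 𝓝 (t₀, x), (q.1 ∈ S → f q.1 q.2 = F q) ∧ (q.1 = t₀ → g q.2 = F q))
    {k : ℕ} (hk : k ≤ n) :
    TendstoLocallyUniformly (fun t => iteratedDeriv k (f t)) (iteratedDeriv k g) (𝓝[S] t₀) := by
  refine tendstoLocallyUniformly_iff_forall_tendsto.2 fun x => ?_
  obtain ⟨F, hF, hfg⟩ := h x
  set Fk := fun q : ℝ × ℝ => iteratedDeriv k (fun y => F (q.1, y)) q.2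
  have hf := eventually_iteratedDeriv_eq_slice (hfg.mono fun _ hq => hq.1) k
  have hg := eventually_iteratedDeriv_eq_slice (f := fun _ => g) (S := {t₀})
    (hfg.mono fun _ hq => hq.2) k
  have hvert : Tendsto (fun q : ℝ × ℝ => (t₀, q.2)) (𝓝 (t₀, x)) (𝓝 (t₀, x)) :=
    (continuous_const.prodMk continuous_snd).tendsto' _ _ rfl
  have hFk := hF.continuousAt_iteratedDeriv_slice hk
  have hlim : Tendsto (fun q => (Fk (t₀, q.2), Fk q)) (𝓝 (t₀, x)) (𝓤 ℝ) :=
    ((hFk.tendsto.comp hvert).prodMk_nhds hFk).mono_right (nhds_le_uniformity _)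
  rw [← nhdsWithin_univ, ← nhdsWithin_prod_eq, prod_univ]
  refine (hlim.mono_left nhdsWithin_le_nhds).congr' ?_
  filter_upwards [eventually_nhdsWithin_of_eventually_nhds hf, self_mem_nhdsWithin,
    nhdsWithin_le_nhds (hvert.eventually hg)] with q hqf hqS hqg
  exact Prod.ext (hqg rfl).symm (hqf hqS).symm

theorem TendstoUniformlyOn.tendsto_iSup_abs_sub {ι α : Type*} {l : Filter ι} {s : Set α}
    {F : ι → α → ℝ} {f : α → ℝ} (h : TendstoUniformlyOn F f l s) :
    Tendsto (fun i => ⨆ x : s, |F i x - f x|) l (𝓝 0) := by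
  refine Metric.tendsto_nhds.2 fun ε hε => ?_
  filter_upwards [Metric.tendstoUniformlyOn_iff.1 h (ε / 2) (half_pos hε)] with i hi
  rw [Real.dist_0_eq_abs, abs_of_nonneg (Real.iSup_nonneg fun _ => abs_nonneg _)]
  refine (Real.iSup_le (fun x => ?_) (half_pos hε).le).trans_lt (half_lt_self hε)
  rw [abs_sub_comm]
  exact (hi x x.2).le

theorem isInvertible_fderiv_comp_inr_of_hasDerivAt {E : Type*} [NormedAddCommGroup E]
    [NormedSpace ℝ E] {Φ : E × ℝ → ℝ} {p : E × ℝ} (hΦ : DifferentiableAt ℝ Φ p) {d : ℝ}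
    (hd : HasDerivAt (fun u => Φ (p.1, u)) d p.2) (hd0 : d ≠ 0) :
    (fderiv ℝ Φ p ∘L .inr ℝ E ℝ).IsInvertible := by
  have hslice : HasFDerivAt (fun u => Φ (p.1, u)) (fderiv ℝ Φ p ∘L .inr ℝ E ℝ) p.2 :=
    hΦ.hasFDerivAt.comp p.2 (hasFDerivAt_prodMk_right p.1 p.2)
  rw [hslice.unique hd.hasFDerivAt]
  exact ⟨ContinuousLinearEquiv.unitsEquivAut ℝ (Units.mk0 d hd0), rfl⟩

section

variable (N : ℕ) (lam μbar z : ℕ → ℝ)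

noncomputable def sumExp (u φ : ℝ) : ℝ :=
  ∑ j ∈ Finset.range (N + 1), lam j * exp (u * (lam j / lam 0) + (μbar j - z j * φ))

theorem sumExp_log {c : ℝ} (hc : 0 < c) (φ : ℝ) :
    sumExp N lam μbar z (log c) φ =
      ∑ j ∈ Finset.range (N + 1), lam j * c ^ (lam j / lam 0) * exp (μbar j - z j * φ) := by
  refine Finset.sum_congr rfl fun j _ => ?_
  rw [mul_assoc, rpow_def_of_pos hc, ← exp_add]

theorem contDiff_sumExp : ContDiff ℝ ⊤ fun p : ℝ × ℝ => sumExp N lam μbar z p.1 p.2 := by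
  unfold sumExp
  fun_prop

variable {N lam μbar z}

theorem hasDerivAt_sumExp (u φ : ℝ) :
    HasDerivAt (fun u => sumExp N lam μbar z u φ)
      (∑ j ∈ Finset.range (N + 1),
        lam j * (exp (u * (lam j / lam 0) + (μbar j - z j * φ)) * (lam j / lam 0))) u := by
  refine HasDerivAt.fun_sum fun j _ => (HasDerivAt.exp ?_).const_mul _
  simpa using ((hasDerivAt_id u).mul_const (lam j / lam 0)).add_const (μbar j - z j * φ)

theorem sumExp_deriv_pos (hlam : ∀ j ≤ N, 0 < lam j) (u φ : ℝ) :
    0 < ∑ j ∈ Finset.range (N + 1),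
        lam j * (exp (u * (lam j / lam 0) + (μbar j - z j * φ)) * (lam j / lam 0)) :=
  Finset.sum_pos (fun j hj => by
    have := hlam j (Finset.mem_range_succ_iff.1 hj)
    have := hlam 0 (Nat.zero_le N)
    positivity) (by simp)

theorem strictMono_mul_add_sumExp (hlam : ∀ j ≤ N, 0 < lam j) {t : ℝ} (ht : 0 ≤ t) (φ : ℝ) :
    StrictMono fun u => t * u + sumExp N lam μbar z u φ := by
  refine (monotone_mul_left_of_nonneg ht).add_strictMono fun u v huv => ?_
  refine Finset.sum_lt_sum_of_nonempty (by simp) fun j hj => ?_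
  have hj := hlam j (Finset.mem_range_succ_iff.1 hj)
  have := mul_lt_mul_of_pos_right huv (div_pos hj (hlam 0 (Nat.zero_le N)))
  gcongr

theorem mul_log_add_sumExp_of_eq (hlam0 : 0 < lam 0) {c t μ ν φ : ℝ} (hc : 0 < c) (ht : 0 < t)
    (h : log c + (t * lam 0)⁻¹ * lam 0 * ∑ j ∈ Finset.range (N + 1),
        lam j * c ^ (lam j / lam 0) * exp (μbar j - z j * φ) = (t * lam 0)⁻¹ * lam 0 * μ + ν) :
    t * log c + sumExp N lam μbar z (log c) φ - t * ν = μ := by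
  rw [← sumExp_log N lam μbar z hc, mul_inv, inv_mul_cancel_right₀ hlam0.ne'] at h
  field_simp at h
  linear_combination h

theorem exists_contDiffAt_solution_sumExp (hlam : ∀ j ≤ N, 0 < lam j) (ν : ℝ) {φ₀ u₀ μ : ℝ}
    (h₀ : sumExp N lam μbar z u₀ φ₀ = μ) :
    ∃ Ψ : ℝ × ℝ → ℝ, ContDiffAt ℝ ⊤ Ψ (0, φ₀) ∧
      ∀ᶠ q in 𝓝 (0, φ₀), q.1 * Ψ q + sumExp N lam μbar z (Ψ q) q.2 - q.1 * ν = μ := by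
  set Φ : (ℝ × ℝ) × ℝ → ℝ := fun p => p.1.1 * p.2 + sumExp N lam μbar z p.2 p.1.2 - p.1.1 * ν
  have hΦ : ContDiff ℝ ⊤ Φ := by
    have := contDiff_sumExp N lam μbar z
    fun_prop
  obtain ⟨d, hd, hd_pos⟩ : ∃ d, HasDerivAt (fun u => sumExp N lam μbar z u φ₀) d u₀ ∧ 0 < d :=
    ⟨_, hasDerivAt_sumExp u₀ φ₀, sumExp_deriv_pos hlam u₀ φ₀⟩
  have hinv := isInvertible_fderiv_comp_inr_of_hasDerivAt (p := ((0, φ₀), u₀))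
    (hΦ.differentiable (by simp) _) (by simpa [Φ] using hd) hd_pos.ne'
  have hΦn : ContDiffAt ℝ ⊤ Φ ((0, φ₀), u₀) := hΦ.contDiffAt
  refine ⟨hΦn.implicitFunction (by simp) hinv, hΦn.contDiffAt_implicitFunction _ hinv, ?_⟩
  filter_upwards [hΦn.eventually_apply_implicitFunction (by simp) hinv] with q hq
  simpa [Φ, h₀] using hq

theorem exists_contDiffAt_eq_of_sumExp_eq (hlam : ∀ j ≤ N, 0 < lam j) {u : ℝ → ℝ → ℝ}
    {us : ℝ → ℝ} {μ ν : ℝ}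
    (hu : ∀ t > 0, ∀ φ, t * u t φ + sumExp N lam μbar z (u t φ) φ - t * ν = μ)
    (hus : ∀ φ, sumExp N lam μbar z (us φ) φ = μ) (x : ℝ) :
    ∃ Ψ : ℝ × ℝ → ℝ, ContDiffAt ℝ ⊤ Ψ (0, x) ∧
      ∀ᶠ q in 𝓝 (0, x), (q.1 ∈ Ioi 0 → u q.1 q.2 = Ψ q) ∧ (q.1 = 0 → us q.2 = Ψ q) := by
  obtain ⟨Ψ, hΨ, hΨeq⟩ := exists_contDiffAt_solution_sumExp hlam ν (hus x)
  refine ⟨Ψ, hΨ, hΨeq.mono fun q hq => ⟨fun ht => ?_, fun ht => ?_⟩⟩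
  · refine (strictMono_mul_add_sumExp (μbar := μbar) (z := z) hlam ht.le q.2).injective ?_
    linarith [hu q.1 ht q.2]
  · refine (strictMono_mul_add_sumExp (μbar := μbar) (z := z) hlam le_rfl q.2).injective ?_
    rw [ht] at hq
    linarith [hus q.2]

theorem tendstoLocallyUniformly_iteratedDeriv_rpow_mul_exp (hlam : ∀ j ≤ N, 0 < lam j)
    {c : ℝ → ℝ → ℝ} {cs : ℝ → ℝ} {μ ν : ℝ} (hc : ∀ t > 0, ∀ φ, 0 < c t φ) (hcs : ∀ φ, 0 < cs φ)
    (hceq : ∀ t > 0, ∀ φ, t * log (c t φ) + sumExp N lam μbar z (log (c t φ)) φ - t * ν = μ)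
    (hcseq : ∀ φ, sumExp N lam μbar z (log (cs φ)) φ = μ) (p r s : ℝ) (k : ℕ) :
    TendstoLocallyUniformly (fun t => iteratedDeriv k fun φ => c t φ ^ p * exp (r - s * φ))
      (iteratedDeriv k fun φ => cs φ ^ p * exp (r - s * φ)) (𝓝[>] 0) := by
  refine tendstoLocallyUniformly_iteratedDeriv_of_contDiffAt (n := k) (fun x => ?_) le_rfl
  obtain ⟨Ψ, hΨ, hΨeq⟩ := exists_contDiffAt_eq_of_sumExp_eq hlam hceq hcseq x
  refine ⟨fun q => exp (Ψ q * p + (r - s * q.2)), ?_,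
    hΨeq.mono fun q hq => ⟨fun ht => ?_, fun ht => ?_⟩⟩
  · have hΨk : ContDiffAt ℝ k Ψ (0, x) := hΨ.of_le le_top
    fun_prop
  · rw [rpow_def_of_pos (hc _ ht _), ← exp_add, hq.1 ht]
  · rw [rpow_def_of_pos (hcs _), ← exp_add, hq.2 ht]

end

theorem stmt8_general
    (N : ℕ)
    (z lam μhat : ℕ → ℝ) (μtilde0 : ℝ)
    (hlam : ∀ i, i ≤ N → 0 < lam i)
    (μbar : ℕ → ℝ)
    (c0 : ℝ → ℝ → ℝ)
    (hc0pos : ∀ Λ : ℝ, 0 < Λ → ∀ φ, 0 < c0 Λ φ)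
    (hc0eq : ∀ Λ : ℝ, 0 < Λ → ∀ φ : ℝ, Real.log (c0 Λ φ)
        + Λ * lam 0 * ∑ j ∈ Finset.range (N+1),
            lam j * (c0 Λ φ) ^ (lam j / lam 0) * Real.exp (μbar j - z j * φ)
      = Λ * lam 0 * μtilde0 + μhat 0)
    (c0s : ℝ → ℝ) (hc0spos : ∀ φ, 0 < c0s φ)
    (hc0seq : ∀ φ : ℝ, ∑ j ∈ Finset.range (N+1),
        lam j * (c0s φ) ^ (lam j / lam 0) * Real.exp (μbar j - z j * φ) = μtilde0)
    :
    ∀ i, i ≤ N → ∀ m : ℕ, ∀ a b : ℝ, a < b →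
      Filter.Tendsto (fun Λ : ℝ => ∑ k ∈ Finset.range (m+1),
          ⨆ φ : Set.Icc a b,
            |iteratedDeriv k (fun ψ : ℝ => ((c0 Λ) ψ) ^ (lam i / lam 0) * Real.exp (μbar i - z i * ψ)) ↑φ
              - iteratedDeriv k (fun ψ : ℝ => (c0s ψ) ^ (lam i / lam 0) * Real.exp (μbar i - z i * ψ)) ↑φ|)
        Filter.atTop (nhds 0) := by
  intro i _ m a b _
  have hlam0 : 0 < lam 0 := hlam 0 (Nat.zero_le N)
  have hpos : ∀ t > 0, 0 < (t * lam 0)⁻¹ := fun t ht => by positivity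
  have hlocal := tendstoLocallyUniformly_iteratedDeriv_rpow_mul_exp hlam
    (fun t ht => hc0pos _ (hpos t ht)) hc0spos
    (fun t ht φ => mul_log_add_sumExp_of_eq hlam0 (hc0pos _ (hpos t ht) φ) ht
      (hc0eq _ (hpos t ht) φ))
    (fun φ => (sumExp_log N lam μbar z (hc0spos φ) φ).trans (hc0seq φ))
    (lam i / lam 0) (μbar i) (z i)
  have hτ : Tendsto (fun Λ : ℝ => (Λ * lam 0)⁻¹) atTop (𝓝[>] 0) :=
    tendsto_inv_atTop_nhdsGT_zero.comp (tendsto_id.atTop_mul_const hlam0)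
  have hunif : ∀ k, TendstoUniformlyOn
      (fun Λ => iteratedDeriv k fun ψ => c0 Λ ψ ^ (lam i / lam 0) * exp (μbar i - z i * ψ))
      (iteratedDeriv k fun ψ => c0s ψ ^ (lam i / lam 0) * exp (μbar i - z i * ψ))
      atTop (Icc a b) := by
    intro k V hV
    have h := hτ.eventually <|
      tendstoLocallyUniformly_iff_forall_isCompact.1 (hlocal k) (Icc a b) isCompact_Icc V hV
    simpa [mul_comm, hlam0.ne'] using h
  simpa using tendsto_finsetSum _ fun k _ => (hunif k).tendsto_iSup_abs_sub

theorem stmt8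
    (N : ℕ) (hN : 1 ≤ N)
    (z lam μhat : ℕ → ℝ) (μtilde0 : ℝ)
    (hz0 : z 0 = 0)
    (hzne : ∀ i, 1 ≤ i → i ≤ N → z i ≠ 0)
    (hmix : ∃ i j, 1 ≤ i ∧ i ≤ N ∧ 1 ≤ j ∧ j ≤ N ∧ z i * z j < 0)
    (hlam : ∀ i, i ≤ N → 0 < lam i)
    (hμt : 0 < μtilde0)
    (hμhat : ∀ i, i ≤ N → 0 < μhat i)
    (μbar : ℕ → ℝ) (hμbar : ∀ i, μbar i = μhat i - lam i / lam 0 * μhat 0)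
    (c0 : ℝ → ℝ → ℝ)
    (hc0pos : ∀ Λ : ℝ, 0 < Λ → ∀ φ, 0 < c0 Λ φ)
    (hc0eq : ∀ Λ : ℝ, 0 < Λ → ∀ φ : ℝ, Real.log (c0 Λ φ)
        + Λ * lam 0 * ∑ j ∈ Finset.range (N+1),
            lam j * (c0 Λ φ) ^ (lam j / lam 0) * Real.exp (μbar j - z j * φ)
      = Λ * lam 0 * μtilde0 + μhat 0)
    (c0s : ℝ → ℝ) (hc0spos : ∀ φ, 0 < c0s φ)
    (hc0seq : ∀ φ : ℝ, ∑ j ∈ Finset.range (N+1),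
        lam j * (c0s φ) ^ (lam j / lam 0) * Real.exp (μbar j - z j * φ) = μtilde0)
    :
    ∀ i, i ≤ N → ∀ m : ℕ, ∀ a b : ℝ, a < b →
      Filter.Tendsto (fun Λ : ℝ => ∑ k ∈ Finset.range (m+1),
          ⨆ φ : Set.Icc a b,
            |iteratedDeriv k (fun ψ : ℝ => ((c0 Λ) ψ) ^ (lam i / lam 0) * Real.exp (μbar i - z i * ψ)) ↑φ
              - iteratedDeriv k (fun ψ : ℝ => (c0s ψ) ^ (lam i / lam 0) * Real.exp (μbar i - z i * ψ)) ↑φ|)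
        Filter.atTop (nhds 0) :=
  stmt8_general N z lam μhat μtilde0 hlam μbar c0 hc0pos hc0eq c0s hc0spos hc0seq
end

section
/- For every φ ∈ ℝ, the derivative of f^* satisfies (f^*)'(φ) = (∑_{i=1}^N z_i λ_i c_i^*(φ))^2 / (∑_{i=0}^N λ_i^2 c_i^*(φ)) − ∑_{i=1}^N z_i^2 c_i^*(φ), and this quantity is strictly negative for every φ ∈ ℝ. -/
/-!
The neutral concentration `c₀*` solves `G(φ, c₀*(φ)) = μ̃₀` for
`G(φ, c) = ∑ λ_j c^{λ_j/λ_0} exp(μ̄_j - z_j φ)`, which is strictly increasing in `c > 0`. So the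
implicit function theorem applies, and it gives `c₀*' = λ₀ c₀* (∑ λ_j z_j c_j*) / ∑ λ_j² c_j*`
(the `j = 0` term of the numerator vanishes since `z₀ = 0`). Differentiating `f*` then yields the
formula. Its negativity is the Cauchy–Schwarz inequality
`(∑ z_i λ_i c_i*)² ≤ (∑ z_i² c_i*)(∑_{i ≥ 1} λ_i² c_i*)`, made strict by the neutral term
`λ₀² c₀* > 0` of the denominator.
-/

open Filter Finset Real Set Topology

theorem HasStrictFDerivAt.hasDerivAt_of_levelSet_eq_graph {𝕜 : Type*} [NontriviallyNormedField 𝕜]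
    [CompleteSpace 𝕜] {G : 𝕜 × 𝕜 → 𝕜} {g : 𝕜 → 𝕜} {x₀ a b : 𝕜}
    (hG : HasStrictFDerivAt G
      (a • ContinuousLinearMap.fst 𝕜 𝕜 𝕜 + b • ContinuousLinearMap.snd 𝕜 𝕜 𝕜) (x₀, g x₀))
    (hb : b ≠ 0) (hg : ∀ᶠ p in 𝓝 (x₀, g x₀), G p = G (x₀, g x₀) → p.2 = g p.1) :
    HasDerivAt g (-(a / b)) x₀ := by
  set G' := a • ContinuousLinearMap.fst 𝕜 𝕜 𝕜 + b • ContinuousLinearMap.snd 𝕜 𝕜 𝕜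
  have h₁ : (G' ∘L .inr 𝕜 𝕜 𝕜) ∘L (b⁻¹ • .id 𝕜 𝕜) = .id 𝕜 𝕜 := by ext; simp [G', hb]
  have h₂ : (b⁻¹ • .id 𝕜 𝕜) ∘L (G' ∘L .inr 𝕜 𝕜 𝕜) = .id 𝕜 𝕜 := by ext; simp [G', hb]
  have hinv := ContinuousLinearMap.IsInvertible.of_inverse h₁ h₂
  set ψ := hG.implicitFunctionOfProdDomain hinv
  have hψ : HasDerivAt ψ (-(a / b)) x₀ := by
    have := (hG.hasStrictFDerivAt_implicitFunctionOfProdDomain hinv).hasFDerivAt.hasDerivAt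
    rw [ContinuousLinearMap.inverse_eq h₁ h₂] at this
    simpa [G', div_eq_mul_inv] using this
  have hgraph : Tendsto (fun x => (x, ψ x)) (𝓝 x₀) (𝓝 (x₀, g x₀)) :=
    tendsto_id.prodMk_nhds (hG.tendsto_implicitFunctionOfProdDomain hinv)
  have hψg : ψ =ᶠ[𝓝 x₀] g := by
    filter_upwards [hG.eventually_apply_implicitFunctionOfProdDomain hinv, hgraph.eventually hg]
      with x hlevel hunique
    exact hunique hlevel
  exact hψ.congr_of_eventuallyEq hψg.symm

theorem hasStrictFDerivAt_rpow_snd_mul_exp (r z m : ℝ) {φ c : ℝ} (hc : 0 < c) :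
    HasStrictFDerivAt (fun p : ℝ × ℝ => p.2 ^ r * exp (m - z * p.1))
      ((-z * (c ^ r * exp (m - z * φ))) • ContinuousLinearMap.fst ℝ ℝ ℝ +
        (r / c * (c ^ r * exp (m - z * φ))) • ContinuousLinearMap.snd ℝ ℝ ℝ) (φ, c) := by
  have hpow : HasStrictFDerivAt (fun p : ℝ × ℝ => p.2 ^ r)
      ((r * c ^ (r - 1)) • ContinuousLinearMap.snd ℝ ℝ ℝ) (φ, c) :=
    (hasStrictFDerivAt_snd (p := (φ, c))).rpow_const (p := r) (Or.inl hc.ne')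
  have hexp : HasStrictFDerivAt (fun p : ℝ × ℝ => exp (m - z * p.1))
      (exp (m - z * φ) • -(z • ContinuousLinearMap.fst ℝ ℝ ℝ)) (φ, c) :=
    (((hasStrictFDerivAt_fst (p := (φ, c))).const_mul z).const_sub m).exp
  refine (hpow.fun_mul hexp).congr_fderiv ?_
  ext <;> simp [rpow_sub_one hc.ne'] <;> field_simp

section SumRpowMulExp

variable {ι : Type*} {s : Finset ι} {w r : ι → ℝ} (z m : ι → ℝ)

theorem strictMonoOn_sum_mul_rpow_mul_exp (hs : s.Nonempty) (hw : ∀ j ∈ s, 0 < w j)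
    (hr : ∀ j ∈ s, 0 < r j) (φ : ℝ) :
    StrictMonoOn (fun c => ∑ j ∈ s, w j * c ^ r j * exp (m j - z j * φ)) (Ioi 0) := by
  intro c₁ hc₁ c₂ _ hlt
  refine sum_lt_sum_of_nonempty hs fun j hj => ?_
  gcongr
  · exact hw j hj
  · exact hc₁.le
  · exact hr j hj

theorem hasStrictFDerivAt_sum_mul_rpow_snd_mul_exp {φ c : ℝ} (hc : 0 < c) :
    HasStrictFDerivAt (fun p : ℝ × ℝ => ∑ j ∈ s, w j * p.2 ^ r j * exp (m j - z j * p.1))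
      ((-∑ j ∈ s, w j * z j * (c ^ r j * exp (m j - z j * φ))) • ContinuousLinearMap.fst ℝ ℝ ℝ +
        (c⁻¹ * ∑ j ∈ s, w j * r j * (c ^ r j * exp (m j - z j * φ))) •
          ContinuousLinearMap.snd ℝ ℝ ℝ) (φ, c) := by
  have := HasStrictFDerivAt.fun_sum (u := s) fun j _ =>
    (hasStrictFDerivAt_rpow_snd_mul_exp (r j) (z j) (m j) (φ := φ) hc).const_mul (w j)
  simp only [mul_assoc] at this ⊢
  refine this.congr_fderiv ?_
  ext <;> simp [mul_sum]; exact sum_congr rfl fun j _ => by field_simp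

theorem hasDerivAt_of_sum_mul_rpow_mul_exp_eq (hs : s.Nonempty) (hw : ∀ j ∈ s, 0 < w j)
    (hr : ∀ j ∈ s, 0 < r j) {c : ℝ → ℝ} {μ : ℝ} (hc : ∀ φ, 0 < c φ)
    (hμ : ∀ φ, ∑ j ∈ s, w j * c φ ^ r j * exp (m j - z j * φ) = μ) (φ : ℝ) :
    HasDerivAt c (c φ * (∑ j ∈ s, w j * z j * (c φ ^ r j * exp (m j - z j * φ))) /
      ∑ j ∈ s, w j * r j * (c φ ^ r j * exp (m j - z j * φ))) φ := by
  have hB : 0 < ∑ j ∈ s, w j * r j * (c φ ^ r j * exp (m j - z j * φ)) :=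
    sum_pos (fun j hj => by have := hw j hj; have := hr j hj; have := hc φ; positivity) hs
  have hunique : ∀ᶠ p in 𝓝 (φ, c φ),
      ∑ j ∈ s, w j * p.2 ^ r j * exp (m j - z j * p.1) =
        ∑ j ∈ s, w j * c φ ^ r j * exp (m j - z j * φ) → p.2 = c p.1 := by
    filter_upwards [continuous_snd.continuousAt.eventually (lt_mem_nhds (hc φ))] with p hp hlevel
    refine (strictMonoOn_sum_mul_rpow_mul_exp z m hs hw hr p.1).injOn hp (hc p.1) ?_
    simp only [hlevel, hμ]
  refine ((hasStrictFDerivAt_sum_mul_rpow_snd_mul_exp z m (hc φ)).hasDerivAt_of_levelSet_eq_graph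
    (mul_pos (inv_pos.2 (hc φ)) hB).ne' hunique).congr_deriv ?_
  rw [neg_div, neg_neg, div_mul_eq_div_div, div_inv_eq_mul, mul_comm]

end SumRpowMulExp

theorem HasDerivAt.sum_mul_rpow_mul_exp {ι : Type*} (s : Finset ι) {c : ℝ → ℝ} {c' φ : ℝ}
    (hc : HasDerivAt c c' φ) (hpos : 0 < c φ) (x r z m : ι → ℝ) :
    HasDerivAt (fun ψ => ∑ i ∈ s, x i * (c ψ ^ r i * Real.exp (m i - z i * ψ)))
      (c' / c φ * ∑ i ∈ s, x i * r i * (c φ ^ r i * Real.exp (m i - z i * φ)) -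
        ∑ i ∈ s, x i * z i * (c φ ^ r i * Real.exp (m i - z i * φ))) φ := by
  refine (HasDerivAt.fun_sum fun i _ => (((hc.rpow_const (p := r i) (Or.inl hpos.ne')).mul
    (((hasDerivAt_id φ).const_mul (z i)).const_sub (m i)).exp).const_mul (x i))).congr_deriv ?_
  rw [mul_sum, ← sum_sub_distrib]
  refine sum_congr rfl fun i _ => ?_
  rw [rpow_sub_one hpos.ne', id]
  field_simp
  ring

theorem sq_sum_mul_mul_div_add_lt {ι : Type*} {s : Finset ι} {x y t : ι → ℝ} {d : ℝ}
    (ht : ∀ i ∈ s, 0 < t i) (hx : ∃ i ∈ s, x i ≠ 0) (hd : 0 < d) :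
    (∑ i ∈ s, x i * y i * t i) ^ 2 / (d + ∑ i ∈ s, y i ^ 2 * t i) < ∑ i ∈ s, x i ^ 2 * t i := by
  have hY : 0 ≤ ∑ i ∈ s, y i ^ 2 * t i :=
    sum_nonneg fun i hi => mul_nonneg (sq_nonneg _) (ht i hi).le
  have hX : 0 < ∑ i ∈ s, x i ^ 2 * t i := by
    obtain ⟨i, hi, hxi⟩ := hx
    exact sum_pos' (fun j hj => mul_nonneg (sq_nonneg _) (ht j hj).le)
      ⟨i, hi, by have := ht i hi; positivity⟩
  have hCS : (∑ i ∈ s, x i * y i * t i) ^ 2 ≤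
      (∑ i ∈ s, x i ^ 2 * t i) * ∑ i ∈ s, y i ^ 2 * t i :=
    sum_sq_le_sum_mul_sum_of_sq_le_mul s
      (fun i hi => mul_nonneg (sq_nonneg _) (ht i hi).le)
      (fun i hi => mul_nonneg (sq_nonneg _) (ht i hi).le) (fun i _ => (by ring : _ = _).le)
  rw [div_lt_iff₀ (by positivity), mul_add]
  linarith [mul_pos hX hd]

theorem Finset.sum_range_add_one_eq_add_sum_Icc {M : Type*} [AddCommMonoid M] (f : ℕ → M)
    (N : ℕ) : ∑ i ∈ range (N + 1), f i = f 0 + ∑ i ∈ Icc 1 N, f i := by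
  rw [range_eq_Ico, Ico_add_one_right_eq_Icc, ← insert_Icc_add_one_left_eq_Icc N.zero_le,
    sum_insert (by simp), zero_add]

theorem stmt13_general
    (N : ℕ)
    (z lam : ℕ → ℝ) (μtilde0 : ℝ)
    (hz0 : z 0 = 0)
    (hmix : ∃ i j, 1 ≤ i ∧ i ≤ N ∧ 1 ≤ j ∧ j ≤ N ∧ z i * z j < 0)
    (hlam : ∀ i, i ≤ N → 0 < lam i)
    (μbar : ℕ → ℝ)
    (c0s : ℝ → ℝ) (hc0spos : ∀ φ, 0 < c0s φ)
    (hc0seq : ∀ φ : ℝ, ∑ j ∈ Finset.range (N+1),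
        lam j * (c0s φ) ^ (lam j / lam 0) * Real.exp (μbar j - z j * φ) = μtilde0)
    :
    ∀ φ : ℝ,
      deriv (fun ψ : ℝ => ∑ i ∈ Finset.Icc 1 N, z i * ((c0s ψ) ^ (lam i / lam 0) * Real.exp (μbar i - z i * ψ))) φ = (∑ i ∈ Finset.Icc 1 N, z i * lam i * ((c0s φ) ^ (lam i / lam 0) * Real.exp (μbar i - z i * φ))) ^ 2 / (∑ i ∈ Finset.range (N+1), lam i ^ 2 * ((c0s φ) ^ (lam i / lam 0) * Real.exp (μbar i - z i * φ))) - ∑ i ∈ Finset.Icc 1 N, z i ^ 2 * ((c0s φ) ^ (lam i / lam 0) * Real.exp (μbar i - z i * φ)) ∧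
      (∑ i ∈ Finset.Icc 1 N, z i * lam i * ((c0s φ) ^ (lam i / lam 0) * Real.exp (μbar i - z i * φ))) ^ 2 / (∑ i ∈ Finset.range (N+1), lam i ^ 2 * ((c0s φ) ^ (lam i / lam 0) * Real.exp (μbar i - z i * φ))) - ∑ i ∈ Finset.Icc 1 N, z i ^ 2 * ((c0s φ) ^ (lam i / lam 0) * Real.exp (μbar i - z i * φ)) < 0 := by
  intro φ
  have hc0 : 0 < c0s φ := hc0spos φ
  have hlam0 : 0 < lam 0 := hlam 0 N.zero_le
  have hlam_range : ∀ j ∈ range (N + 1), 0 < lam j :=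
    fun j hj => hlam j (mem_range_succ_iff.1 hj)
  set t : ℕ → ℝ := fun i => c0s φ ^ (lam i / lam 0) * Real.exp (μbar i - z i * φ)
  set S1 := ∑ i ∈ Icc 1 N, z i * lam i * t i
  set S2 := ∑ i ∈ range (N + 1), lam i ^ 2 * t i
  have hnum : ∑ j ∈ range (N + 1), lam j * z j * t j = S1 := by
    rw [sum_range_add_one_eq_add_sum_Icc, hz0, mul_zero, zero_mul, zero_add]
    exact sum_congr rfl fun i _ => by ring
  have hden : ∑ j ∈ range (N + 1), lam j * (lam j / lam 0) * t j = S2 / lam 0 := by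
    rw [sum_div]
    exact sum_congr rfl fun i _ => by ring
  have hc := hasDerivAt_of_sum_mul_rpow_mul_exp_eq z μbar ⟨0, by simp⟩ hlam_range
    (fun j hj => div_pos (hlam_range j hj) hlam0) hc0spos hc0seq φ
  rw [hnum, hden] at hc
  have hf := hc.sum_mul_rpow_mul_exp (Icc 1 N) hc0 z (fun i => lam i / lam 0) z μbar
  refine ⟨hf.deriv.trans ?_, ?_⟩
  · have hratio : ∑ i ∈ Icc 1 N, z i * (lam i / lam 0) * t i = S1 / lam 0 := by
      rw [sum_div]
      exact sum_congr rfl fun i _ => by ring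
    simp only [sq]
    rw [hratio, sub_left_inj]
    field_simp
  · obtain ⟨i, _j, hi1, hiN, -, -, hij⟩ := hmix
    rw [show S2 = lam 0 ^ 2 * t 0 + ∑ i ∈ Icc 1 N, lam i ^ 2 * t i from
      sum_range_add_one_eq_add_sum_Icc _ N, sub_neg]
    exact sq_sum_mul_mul_div_add_lt (fun i _ => by positivity)
      ⟨i, mem_Icc.2 ⟨hi1, hiN⟩, left_ne_zero_of_mul hij.ne⟩ (by positivity)

theorem stmt13
    (N : ℕ) (hN : 1 ≤ N)
    (z lam μhat : ℕ → ℝ) (μtilde0 : ℝ)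
    (hz0 : z 0 = 0)
    (hzne : ∀ i, 1 ≤ i → i ≤ N → z i ≠ 0)
    (hmix : ∃ i j, 1 ≤ i ∧ i ≤ N ∧ 1 ≤ j ∧ j ≤ N ∧ z i * z j < 0)
    (hlam : ∀ i, i ≤ N → 0 < lam i)
    (hμt : 0 < μtilde0)
    (hμhat : ∀ i, i ≤ N → 0 < μhat i)
    (μbar : ℕ → ℝ) (hμbar : ∀ i, μbar i = μhat i - lam i / lam 0 * μhat 0)
    (c0s : ℝ → ℝ) (hc0spos : ∀ φ, 0 < c0s φ)
    (hc0seq : ∀ φ : ℝ, ∑ j ∈ Finset.range (N+1),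
        lam j * (c0s φ) ^ (lam j / lam 0) * Real.exp (μbar j - z j * φ) = μtilde0)
    :
    ∀ φ : ℝ,
      deriv (fun ψ : ℝ => ∑ i ∈ Finset.Icc 1 N, z i * ((c0s ψ) ^ (lam i / lam 0) * Real.exp (μbar i - z i * ψ))) φ = (∑ i ∈ Finset.Icc 1 N, z i * lam i * ((c0s φ) ^ (lam i / lam 0) * Real.exp (μbar i - z i * φ))) ^ 2 / (∑ i ∈ Finset.range (N+1), lam i ^ 2 * ((c0s φ) ^ (lam i / lam 0) * Real.exp (μbar i - z i * φ))) - ∑ i ∈ Finset.Icc 1 N, z i ^ 2 * ((c0s φ) ^ (lam i / lam 0) * Real.exp (μbar i - z i * φ)) ∧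
      (∑ i ∈ Finset.Icc 1 N, z i * lam i * ((c0s φ) ^ (lam i / lam 0) * Real.exp (μbar i - z i * φ))) ^ 2 / (∑ i ∈ Finset.range (N+1), lam i ^ 2 * ((c0s φ) ^ (lam i / lam 0) * Real.exp (μbar i - z i * φ))) - ∑ i ∈ Finset.Icc 1 N, z i ^ 2 * ((c0s φ) ^ (lam i / lam 0) * Real.exp (μbar i - z i * φ)) < 0 :=
  stmt13_general N z lam μtilde0 hz0 hmix hlam μbar c0s hc0spos hc0seq
end

section
/- The limits m^* = lim_{φ → +∞} f^*(φ) and M^* = lim_{φ → −∞} f^*(φ) exist and are finite, with m^* < 0 and M^* > 0, and moreover m^* < f^*(φ) < M^* for every φ ∈ ℝ. -/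
/-!
Write `c_j^*(φ) = exp (λ_j u(φ) + μ̄_j - z_j φ)` with `u = log c_0^* / λ_0`. The constraint
`∑ λ_j c_j^* = μ̃_0` makes `f^*` strictly decreasing and bounded, so both limits exist and bound
`f^*` strictly. As `φ → +∞`, a species with `z_g < 0` can stay bounded only if `u → -∞`, so every
species with `z_j ≥ 0` dies out and `f^* + κ μ̃_0 ≤ o(1)`, where `κ > 0` satisfies `κ λ_j ≤ -z_j`
for all negative species; this gives `m^* < 0`. Reflecting `φ ↦ -φ`, `z ↦ -z` gives `M^* > 0`.
-/

open Filter Real Set Topology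

noncomputable def boltzmannConc {ι : Type*} (w b z : ι → ℝ) (u : ℝ → ℝ) (j : ι) (φ : ℝ) : ℝ :=
  exp (w j * u φ + b j - z j * φ)

noncomputable def chargeDensity {ι : Type*} (s : Finset ι) (w b z : ι → ℝ) (u : ℝ → ℝ)
    (φ : ℝ) : ℝ :=
  ∑ j ∈ s, z j * boltzmannConc w b z u j φ

lemma mul_exp_sub_one_pos {r : ℝ} (hr : r ≠ 0) : 0 < r * (exp r - 1) := by
  rcases hr.lt_or_gt with hneg | hpos
  · exact mul_pos_of_neg_of_neg hneg (sub_neg.2 (exp_lt_one_iff.2 hneg))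
  · exact mul_pos hpos (sub_pos.2 (one_lt_exp_iff.2 hpos))

lemma mul_exp_sub_one_nonneg (r : ℝ) : 0 ≤ r * (exp r - 1) := by
  rcases eq_or_ne r 0 with rfl | hr
  · simp
  · exact (mul_exp_sub_one_pos hr).le

section

variable {ι : Type*} {s : Finset ι} {w b z : ι → ℝ} {u : ℝ → ℝ} {C : ℝ}

lemma boltzmannConc_pos (j : ι) (φ : ℝ) : 0 < boltzmannConc w b z u j φ := exp_pos _

lemma boltzmannConc_eq_mul_exp (j : ι) (φ ψ : ℝ) :
    boltzmannConc w b z u j ψ =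
      boltzmannConc w b z u j φ * exp (w j * (u ψ - u φ) - z j * (ψ - φ)) := by
  rw [boltzmannConc, boltzmannConc, ← exp_add]
  ring_nf

lemma boltzmannConc_le_div (hw : ∀ j ∈ s, 0 < w j)
    (hC : ∀ φ, ∑ j ∈ s, w j * boltzmannConc w b z u j φ = C) {j : ι} (hj : j ∈ s) (φ : ℝ) :
    boltzmannConc w b z u j φ ≤ C / w j := by
  rw [le_div_iff₀' (hw j hj), ← hC φ]
  exact Finset.single_le_sum (f := fun k => w k * boltzmannConc w b z u k φ)
    (fun k hk => (mul_pos (hw k hk) (boltzmannConc_pos k φ)).le) hj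

/-- With `r j` the increment of the exponent of species `j` from `φ₁` to `φ₂ = φ₁ + Δ`, the
constraint gives `∑ w j cⱼ (exp (r j) - 1) = 0` and `z j Δ = w j (u φ₂ - u φ₁) - r j`, so
`Δ (F φ₂ - F φ₁) = -∑ cⱼ r j (exp (r j) - 1) < 0`; the last sum vanishes only if every `z j` is
a common multiple of `w j`, which mixed signs exclude. -/
theorem chargeDensity_strictAnti (hw : ∀ j ∈ s, 0 < w j)
    (hC : ∀ φ, ∑ j ∈ s, w j * boltzmannConc w b z u j φ = C)
    (hneg : ∃ i ∈ s, z i < 0) (hpos : ∃ i ∈ s, 0 < z i) :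
    StrictAnti (chargeDensity s w b z u) := by
  intro φ₁ φ₂ hlt
  set c := fun j => boltzmannConc w b z u j φ₁
  set Δ := φ₂ - φ₁
  set δ := u φ₂ - u φ₁
  set r := fun j => w j * δ - z j * Δ
  have hΔ : 0 < Δ := sub_pos.2 hlt
  have hstep : ∀ j, boltzmannConc w b z u j φ₂ = c j * exp (r j) := fun j =>
    boltzmannConc_eq_mul_exp j φ₁ φ₂
  have hbalance : ∑ j ∈ s, w j * c j * (exp (r j) - 1) = 0 := by
    have := hC φ₂
    simp only [hstep, ← hC φ₁] at this
    simp only [mul_sub, mul_one, Finset.sum_sub_distrib]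
    linarith [show ∑ j ∈ s, w j * c j * exp (r j) = ∑ j ∈ s, w j * (c j * exp (r j)) by
      simp only [mul_assoc]]
  have hdiff : Δ * (chargeDensity s w b z u φ₂ - chargeDensity s w b z u φ₁) =
      δ * ∑ j ∈ s, w j * c j * (exp (r j) - 1) - ∑ j ∈ s, c j * (r j * (exp (r j) - 1)) := by
    simp only [chargeDensity, hstep, Finset.mul_sum, ← Finset.sum_sub_distrib]
    refine Finset.sum_congr rfl fun j _ => ?_
    simp only [c, r]
    ring
  obtain ⟨i₀, hi₀, hri₀⟩ : ∃ i ∈ s, r i ≠ 0 := by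
    by_contra! hr
    obtain ⟨i, hi, hzi⟩ := hneg
    obtain ⟨k, hk, hzk⟩ := hpos
    have hδi : w i * δ < 0 := by linarith [hr i hi, mul_neg_of_neg_of_pos hzi hΔ]
    have hδk : 0 < w k * δ := by linarith [hr k hk, mul_pos hzk hΔ]
    linarith [neg_of_mul_neg_right hδi (hw i hi).le, pos_of_mul_pos_right hδk (hw k hk).le]
  have hdissipation : 0 < ∑ j ∈ s, c j * (r j * (exp (r j) - 1)) :=
    Finset.sum_pos' (fun j _ => mul_nonneg (boltzmannConc_pos j φ₁).le (mul_exp_sub_one_nonneg _))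
      ⟨i₀, hi₀, mul_pos (boltzmannConc_pos i₀ φ₁) (mul_exp_sub_one_pos hri₀)⟩
  rw [hbalance, mul_zero, zero_sub] at hdiff
  exact sub_neg.1 (neg_of_mul_neg_right (hdiff ▸ neg_neg_of_pos hdissipation) hΔ.le)

lemma tendsto_atTop_atBot_of_neg_charge (hw : ∀ j ∈ s, 0 < w j)
    (hC : ∀ φ, ∑ j ∈ s, w j * boltzmannConc w b z u j φ = C) {g : ι} (hg : g ∈ s)
    (hzg : z g < 0) : Tendsto u atTop atBot := by
  have hbound : ∀ φ, w g * u φ ≤ (log (C / w g) - b g) + z g * φ := fun φ => by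
    have hle := boltzmannConc_le_div hw hC hg φ
    have := (le_log_iff_exp_le ((boltzmannConc_pos g φ).trans_le hle)).2 hle
    linarith
  refine (tendsto_const_mul_atBot_of_pos (hw g hg)).1 (tendsto_atBot_mono hbound ?_)
  exact tendsto_atBot_add_const_left _ _ ((tendsto_const_mul_atBot_of_neg hzg).2 tendsto_id)

lemma tendsto_boltzmannConc_atTop_zero (hw : ∀ j ∈ s, 0 < w j)
    (hC : ∀ φ, ∑ j ∈ s, w j * boltzmannConc w b z u j φ = C) (hneg : ∃ g ∈ s, z g < 0)
    {j : ι} (hj : j ∈ s) (hzj : 0 ≤ z j) :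
    Tendsto (boltzmannConc w b z u j) atTop (𝓝 0) := by
  obtain ⟨g, hg, hzg⟩ := hneg
  have hu := tendsto_atTop_atBot_of_neg_charge hw hC hg hzg
  have hdom : Tendsto (fun φ => w j * u φ + b j) atTop atBot :=
    tendsto_atBot_add_const_right _ _ ((tendsto_const_mul_atBot_of_pos (hw j hj)).2 hu)
  refine tendsto_exp_atBot.comp (tendsto_atBot_mono' atTop ?_ hdom)
  filter_upwards [eventually_ge_atTop 0] with φ hφ
  linarith [mul_nonneg hzj hφ]

lemma exists_pos_mul_le_neg (hw : ∀ j ∈ s, 0 < w j) :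
    ∃ κ > 0, ∀ j ∈ s, z j < 0 → κ * w j ≤ -z j := by
  have hsmall : ∀ j ∈ s, ∀ᶠ κ in 𝓝[>] (0 : ℝ), z j < 0 → κ * w j ≤ -z j := fun j hj => by
    by_cases hz : z j < 0
    · have : ∀ᶠ κ in 𝓝[>] (0 : ℝ), κ < -z j / w j :=
        nhdsWithin_le_nhds (gt_mem_nhds (div_pos (neg_pos.2 hz) (hw j hj)))
      filter_upwards [this] with κ hκ _
      exact ((lt_div_iff₀ (hw j hj)).1 hκ).le
    · exact Eventually.of_forall fun _ h => absurd h hz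
  obtain ⟨κ, h, hκ⟩ := (((Finset.eventually_all s).2 hsmall).and self_mem_nhdsWithin).exists
  exact ⟨κ, hκ, h⟩

theorem exists_tendsto_chargeDensity_atTop (hw : ∀ j ∈ s, 0 < w j)
    (hC : ∀ φ, ∑ j ∈ s, w j * boltzmannConc w b z u j φ = C)
    (hneg : ∃ i ∈ s, z i < 0) (hpos : ∃ i ∈ s, 0 < z i) :
    ∃ m, Tendsto (chargeDensity s w b z u) atTop (𝓝 m) ∧ m < 0 ∧
      ∀ φ, m < chargeDensity s w b z u φ := by
  have hanti := chargeDensity_strictAnti hw hC hneg hpos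
  have hbdd : BddBelow (range (chargeDensity s w b z u)) := by
    refine ⟨-∑ j ∈ s, |z j| * (C / w j), ?_⟩
    rintro _ ⟨φ, rfl⟩
    rw [← Finset.sum_neg_distrib]
    refine Finset.sum_le_sum fun j hj => ?_
    have := boltzmannConc_le_div hw hC hj φ
    nlinarith [neg_abs_le (z j), abs_nonneg (z j), boltzmannConc_pos (w := w) (b := b) (z := z) (u := u) j φ]
  have hC0 : 0 < C := by
    obtain ⟨g, hg, -⟩ := hneg
    rw [← hC 0]
    exact Finset.sum_pos (fun j hj => mul_pos (hw j hj) (boltzmannConc_pos j 0)) ⟨g, hg⟩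
  obtain ⟨κ, hκ, hκz⟩ := exists_pos_mul_le_neg (z := z) hw
  -- Adding `κ C = ∑ κ w j cⱼ` leaves only nonpositive terms besides those of nonnegative charge.
  have hbound : ∀ φ, chargeDensity s w b z u φ + κ * C ≤
      ∑ j ∈ s, if 0 ≤ z j then (z j + κ * w j) * boltzmannConc w b z u j φ else 0 := fun φ => by
    rw [← hC φ, chargeDensity, Finset.mul_sum, ← Finset.sum_add_distrib]
    refine Finset.sum_le_sum fun j hj => ?_
    split_ifs with hz
    · exact (by ring : _ = _).le
    · nlinarith [hκz j hj (not_le.1 hz), boltzmannConc_pos (w := w) (b := b) (z := z) (u := u) j φ]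
  have hlim : Tendsto (fun φ => ∑ j ∈ s,
      if 0 ≤ z j then (z j + κ * w j) * boltzmannConc w b z u j φ else 0) atTop (𝓝 0) := by
    have hterm : ∀ j ∈ s, Tendsto (fun φ =>
        if 0 ≤ z j then (z j + κ * w j) * boltzmannConc w b z u j φ else 0) atTop (𝓝 0) :=
      fun j hj => by
        split_ifs with hz
        · simpa using (tendsto_boltzmannConc_atTop_zero hw hC hneg hj hz).const_mul (z j + κ * w j)
        · exact tendsto_const_nhds
    simpa using tendsto_finsetSum s hterm
  have hmT := tendsto_atTop_ciInf hanti.antitone hbdd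
  refine ⟨⨅ φ, chargeDensity s w b z u φ, hmT, ?_, fun φ => ?_⟩
  · nlinarith [le_of_tendsto_of_tendsto' (hmT.add_const (κ * C)) hlim hbound]
  · exact (ciInf_le hbdd (φ + 1)).trans_lt (hanti (lt_add_one φ))

lemma boltzmannConc_neg (j : ι) (ψ : ℝ) :
    boltzmannConc w b (-z) (fun t => u (-t)) j ψ = boltzmannConc w b z u j (-ψ) := by
  simp only [boltzmannConc, Pi.neg_apply, neg_mul, mul_neg, sub_neg_eq_add]

lemma chargeDensity_neg (ψ : ℝ) :
    chargeDensity s w b (-z) (fun t => u (-t)) ψ = -chargeDensity s w b z u (-ψ) := by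
  simp only [chargeDensity, boltzmannConc_neg, Pi.neg_apply, neg_mul, Finset.sum_neg_distrib]

theorem exists_tendsto_chargeDensity_atBot (hw : ∀ j ∈ s, 0 < w j)
    (hC : ∀ φ, ∑ j ∈ s, w j * boltzmannConc w b z u j φ = C)
    (hneg : ∃ i ∈ s, z i < 0) (hpos : ∃ i ∈ s, 0 < z i) :
    ∃ M, Tendsto (chargeDensity s w b z u) atBot (𝓝 M) ∧ 0 < M ∧
      ∀ φ, chargeDensity s w b z u φ < M := by
  obtain ⟨m, hm, hm0, hmF⟩ := exists_tendsto_chargeDensity_atTop (z := -z) (u := fun t => u (-t))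
    hw (fun φ => by simpa only [boltzmannConc_neg] using hC (-φ))
    (by simpa only [Pi.neg_apply, neg_neg_iff_pos] using hpos)
    (by simpa only [Pi.neg_apply, neg_pos] using hneg)
  refine ⟨-m, ?_, by linarith, fun φ => ?_⟩
  · simpa [Function.comp_def, chargeDensity_neg] using (hm.comp tendsto_neg_atBot_atTop).neg
  · have := hmF (-φ)
    rw [chargeDensity_neg, neg_neg] at this
    linarith

end

theorem stmt15_general
    (N : ℕ)
    (z lam : ℕ → ℝ) (μtilde0 : ℝ)
    (hz0 : z 0 = 0)
    (hmix : ∃ i j, 1 ≤ i ∧ i ≤ N ∧ 1 ≤ j ∧ j ≤ N ∧ z i * z j < 0)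
    (hlam : ∀ i, i ≤ N → 0 < lam i)
    (μbar : ℕ → ℝ)
    (c0s : ℝ → ℝ) (hc0spos : ∀ φ, 0 < c0s φ)
    (hc0seq : ∀ φ : ℝ, ∑ j ∈ Finset.range (N+1),
        lam j * (c0s φ) ^ (lam j / lam 0) * Real.exp (μbar j - z j * φ) = μtilde0)
    :
    ∃ mstar Mstar : ℝ,
      Filter.Tendsto (fun φ : ℝ => ∑ i ∈ Finset.Icc 1 N, z i * ((c0s φ) ^ (lam i / lam 0) * Real.exp (μbar i - z i * φ))) Filter.atTop (nhds mstar) ∧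
      Filter.Tendsto (fun φ : ℝ => ∑ i ∈ Finset.Icc 1 N, z i * ((c0s φ) ^ (lam i / lam 0) * Real.exp (μbar i - z i * φ))) Filter.atBot (nhds Mstar) ∧
      mstar < 0 ∧ 0 < Mstar ∧
      (∀ φ : ℝ, mstar < ∑ i ∈ Finset.Icc 1 N, z i * ((c0s φ) ^ (lam i / lam 0) * Real.exp (μbar i - z i * φ)) ∧ ∑ i ∈ Finset.Icc 1 N, z i * ((c0s φ) ^ (lam i / lam 0) * Real.exp (μbar i - z i * φ)) < Mstar) := by
  set u : ℝ → ℝ := fun φ => log (c0s φ) / lam 0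
  have hconc : ∀ i φ, c0s φ ^ (lam i / lam 0) * exp (μbar i - z i * φ) =
      boltzmannConc lam μbar z u i φ := fun i φ => by
    rw [rpow_def_of_pos (hc0spos φ), ← exp_add, boltzmannConc]
    congr 1
    simp only [u]
    ring
  have hf : ∀ φ, ∑ i ∈ Finset.Icc 1 N, z i * (c0s φ ^ (lam i / lam 0) * exp (μbar i - z i * φ))
      = chargeDensity (Finset.range (N + 1)) lam μbar z u φ := fun φ => by
    simp only [hconc, chargeDensity]
    refine Finset.sum_subset (fun j hj => ?_) fun j hjN hj => ?_
    · simp only [Finset.mem_Icc, Finset.mem_range] at hj ⊢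
      omega
    · obtain rfl : j = 0 := by
        simp only [Finset.mem_Icc, Finset.mem_range] at hj hjN
        omega
      rw [hz0, zero_mul]
  have hw : ∀ j ∈ Finset.range (N + 1), 0 < lam j := fun j hj =>
    hlam j (Nat.lt_succ_iff.1 (Finset.mem_range.1 hj))
  have hC : ∀ φ, ∑ j ∈ Finset.range (N + 1), lam j * boltzmannConc lam μbar z u j φ = μtilde0 :=
    fun φ => by simpa only [mul_assoc, hconc] using hc0seq φ
  obtain ⟨hneg, hpos⟩ : (∃ i ∈ Finset.range (N + 1), z i < 0) ∧
      ∃ i ∈ Finset.range (N + 1), 0 < z i := by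
    obtain ⟨i, j, -, hi, -, hj, hij⟩ := hmix
    have hi' : i ∈ Finset.range (N + 1) := Finset.mem_range.2 (by omega)
    have hj' : j ∈ Finset.range (N + 1) := Finset.mem_range.2 (by omega)
    rcases mul_neg_iff.1 hij with ⟨hzi, hzj⟩ | ⟨hzi, hzj⟩
    exacts [⟨⟨j, hj', hzj⟩, i, hi', hzi⟩, ⟨⟨i, hi', hzi⟩, j, hj', hzj⟩]
  obtain ⟨m, hm, hm0, hmF⟩ := exists_tendsto_chargeDensity_atTop hw hC hneg hpos
  obtain ⟨M, hM, hM0, hMF⟩ := exists_tendsto_chargeDensity_atBot hw hC hneg hpos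
  simp only [hf]
  exact ⟨m, M, hm, hM, hm0, hM0, fun φ => ⟨hmF φ, hMF φ⟩⟩

theorem stmt15
    (N : ℕ) (hN : 1 ≤ N)
    (z lam μhat : ℕ → ℝ) (μtilde0 : ℝ)
    (hz0 : z 0 = 0)
    (hzne : ∀ i, 1 ≤ i → i ≤ N → z i ≠ 0)
    (hmix : ∃ i j, 1 ≤ i ∧ i ≤ N ∧ 1 ≤ j ∧ j ≤ N ∧ z i * z j < 0)
    (hlam : ∀ i, i ≤ N → 0 < lam i)
    (hμt : 0 < μtilde0)
    (hμhat : ∀ i, i ≤ N → 0 < μhat i)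
    (μbar : ℕ → ℝ) (hμbar : ∀ i, μbar i = μhat i - lam i / lam 0 * μhat 0)
    (c0s : ℝ → ℝ) (hc0spos : ∀ φ, 0 < c0s φ)
    (hc0seq : ∀ φ : ℝ, ∑ j ∈ Finset.range (N+1),
        lam j * (c0s φ) ^ (lam j / lam 0) * Real.exp (μbar j - z j * φ) = μtilde0)
    :
    ∃ mstar Mstar : ℝ,
      Filter.Tendsto (fun φ : ℝ => ∑ i ∈ Finset.Icc 1 N, z i * ((c0s φ) ^ (lam i / lam 0) * Real.exp (μbar i - z i * φ))) Filter.atTop (nhds mstar) ∧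
      Filter.Tendsto (fun φ : ℝ => ∑ i ∈ Finset.Icc 1 N, z i * ((c0s φ) ^ (lam i / lam 0) * Real.exp (μbar i - z i * φ))) Filter.atBot (nhds Mstar) ∧
      mstar < 0 ∧ 0 < Mstar ∧
      (∀ φ : ℝ, mstar < ∑ i ∈ Finset.Icc 1 N, z i * ((c0s φ) ^ (lam i / lam 0) * Real.exp (μbar i - z i * φ)) ∧ ∑ i ∈ Finset.Icc 1 N, z i * ((c0s φ) ^ (lam i / lam 0) * Real.exp (μbar i - z i * φ)) < Mstar) :=
  stmt15_general N z lam μtilde0 hz0 hmix hlam μbar c0s hc0spos hc0seq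
end
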